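/- Let p > 0 and let r : [0,1] → [0,p] be measurable and nonincreasing. Then the function c ↦ c + ∫_ℝ r(Φ((v−c)/σ_ε))·φ((v−μ_c)/σ_v)/σ_v dv is strictly increasing on ℝ. Consequently, the indifference equation c + ∫_ℝ r(Φ((v−c)/σ_ε))·φ((v−μ_c)/σ_v)/σ_v dv = p has at most one solution c ∈ ℝ; i.e., the equilibrium threshold of the consumers' subgame under a decreasing reward program is unique. -/

import Mathlib

noncomputable section

open MeasureTheory Real Set Filter

/-- standard normal pdf φ -/
def stdPdf (x : ℝ) : ℝ := (Real.sqrt (2 * Real.pi))⁻¹ * Real.exp (-(x ^ 2) / 2)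

/-- standard normal cdf Φ -/
def stdCdf (x : ℝ) : ℝ := ∫ t in Set.Iic x, stdPdf t

/-- posterior expected reward  E[r ‖ x] = ∫ r(v) φ((v-μ_x)/σ_v)/σ_v dv, where
    μ_x = τ x + (1-τ) θ, τ = σθ²/(σε²+σθ²), σ_v = σε σθ / √(σε²+σθ²). -/
def postReward (θ σε σθ : ℝ) (r : ℝ → ℝ) (x : ℝ) : ℝ :=
  ∫ v, r v * stdPdf ((v - (σθ ^ 2 / (σε ^ 2 + σθ ^ 2) * x +
      (1 - σθ ^ 2 / (σε ^ 2 + σθ ^ 2)) * θ)) / (σε * σθ / Real.sqrt (σε ^ 2 + σθ ^ 2))) /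
    (σε * σθ / Real.sqrt (σε ^ 2 + σθ ^ 2))

/-- expected profit  Π(p, r, c) = ∫ (p - r(v)) Φ((v-c)/σε) φ((θ-v)/σθ)/σθ dv. -/
def profit (θ σε σθ : ℝ) (p : ℝ) (r : ℝ → ℝ) (c : ℝ) : ℝ :=
  ∫ v, (p - r v) * stdCdf ((v - c) / σε) * stdPdf ((θ - v) / σθ) / σθ

lemma stdPdf_nonneg (x : ℝ) : 0 ≤ stdPdf x := by
  unfold stdPdf
  positivity

lemma stdPdf_eq (x : ℝ) : stdPdf x = (Real.sqrt (2 * Real.pi))⁻¹ * Real.exp (-(2⁻¹) * x ^ 2) := by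
  unfold stdPdf; ring_nf

lemma stdPdf_integrable : Integrable stdPdf := by
  have h := (integrable_exp_neg_mul_sq (by norm_num : (0:ℝ) < 2⁻¹)).const_mul
    (Real.sqrt (2 * Real.pi))⁻¹
  refine h.congr ?_
  filter_upwards with x
  rw [stdPdf_eq]

lemma stdPdf_integral : ∫ x, stdPdf x = 1 := by
  have h2π : (0:ℝ) < Real.sqrt (2 * Real.pi) := Real.sqrt_pos.2 (by positivity)
  have : ∫ x, stdPdf x = (Real.sqrt (2 * Real.pi))⁻¹ * ∫ x, Real.exp (-(2⁻¹) * x ^ 2) := by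
    rw [← integral_const_mul]
    congr 1; ext x; rw [stdPdf_eq]
  rw [this, integral_gaussian]
  rw [show Real.pi / 2⁻¹ = 2 * Real.pi by ring]
  field_simp

lemma stdCdf_mono : Monotone stdCdf := by
  intro x y hxy
  exact setIntegral_mono_set stdPdf_integrable.integrableOn
    (Eventually.of_forall stdPdf_nonneg) (HasSubset.Subset.eventuallyLE (Iic_subset_Iic.2 hxy))

lemma stdCdf_measurable : Measurable stdCdf := stdCdf_mono.measurable

lemma stdCdf_mem_Icc (x : ℝ) : stdCdf x ∈ Set.Icc (0:ℝ) 1 := by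
  constructor
  · exact setIntegral_nonneg measurableSet_Iic (fun t _ => stdPdf_nonneg t)
  · rw [← stdPdf_integral]
    exact setIntegral_le_integral stdPdf_integrable (Eventually.of_forall stdPdf_nonneg)

lemma postReward_eq (θ σε σθ : ℝ) (hσε : 0 < σε) (hσθ : 0 < σθ) (f : ℝ → ℝ) (c : ℝ) :
    postReward θ σε σθ f c =
      ∫ u, f (σε * σθ / Real.sqrt (σε ^ 2 + σθ ^ 2) * u +
        (σθ ^ 2 / (σε ^ 2 + σθ ^ 2) * c + (1 - σθ ^ 2 / (σε ^ 2 + σθ ^ 2)) * θ)) * stdPdf u := by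
  set s : ℝ := σε * σθ / Real.sqrt (σε ^ 2 + σθ ^ 2) with hs
  set μ : ℝ := σθ ^ 2 / (σε ^ 2 + σθ ^ 2) * c + (1 - σθ ^ 2 / (σε ^ 2 + σθ ^ 2)) * θ with hμ
  have hspos : 0 < s := by
    have : (0:ℝ) < Real.sqrt (σε ^ 2 + σθ ^ 2) := Real.sqrt_pos.2 (by positivity)
    positivity
  have hsne : s ≠ 0 := hspos.ne'
  set G : ℝ → ℝ := fun u => f (s * u + μ) * stdPdf u / s with hG
  have step1 : postReward θ σε σθ f c = ∫ v, G ((v - μ) / s) := by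
    unfold postReward
    congr 1; ext v
    rw [hG]
    simp only
    rw [show s * ((v - μ) / s) + μ = v by field_simp; ring]
  rw [step1]
  have step2 : (∫ v, G ((v - μ) / s)) = ∫ v, (fun w => G (w / s)) (v - μ) := rfl
  rw [step2, integral_sub_right_eq_self (fun w => G (w / s)) μ,
    MeasureTheory.Measure.integral_comp_div G s]
  rw [abs_of_pos hspos, smul_eq_mul]
  rw [hG]
  simp only
  rw [integral_div]
  field_simp


/-- for a nonincreasing reward program `r` (as a function of the sales volume),
    the map c ↦ c + E_{v|c}[r(Φ((v-c)/σε))] is strictly increasing; consequently the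
    equilibrium threshold of the consumers' subgame is unique. -/
theorem stmt_14 (θ σε σθ : ℝ) (hσε : 0 < σε) (hσθ : 0 < σθ)
    (p : ℝ) (hp : 0 < p)
    (r : ℝ → ℝ) (hmeas : Measurable r)
    (hanti : AntitoneOn r (Set.Icc 0 1))
    (hrange : ∀ x ∈ Set.Icc (0 : ℝ) 1, r x ∈ Set.Icc 0 p) :
    StrictMono (fun c : ℝ =>
      c + postReward θ σε σθ (fun v => r (stdCdf ((v - c) / σε))) c) ∧
    ∀ c₁ c₂ : ℝ,
      c₁ + postReward θ σε σθ (fun v => r (stdCdf ((v - c₁) / σε))) c₁ = p →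
      c₂ + postReward θ σε σθ (fun v => r (stdCdf ((v - c₂) / σε))) c₂ = p →
      c₁ = c₂ := by
  set s : ℝ := σε * σθ / Real.sqrt (σε ^ 2 + σθ ^ 2) with hs
  set τ : ℝ := σθ ^ 2 / (σε ^ 2 + σθ ^ 2) with hτ
  -- rewrite postReward
  have key : ∀ c : ℝ, postReward θ σε σθ (fun v => r (stdCdf ((v - c) / σε))) c =
      ∫ u, r (stdCdf ((s * u + (τ * c + (1 - τ) * θ) - c) / σε)) * stdPdf u := by
    intro c
    exact postReward_eq θ σε σθ hσε hσθ (fun v => r (stdCdf ((v - c) / σε))) c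
  -- integrability
  have hint : ∀ a b : ℝ, Integrable (fun u => r (stdCdf ((a * u + b) / σε)) * stdPdf u) := by
    intro a b
    refine Integrable.mono' (stdPdf_integrable.const_mul p) ?_ ?_
    · exact ((hmeas.comp (stdCdf_measurable.comp (by fun_prop))).mul
        (by unfold stdPdf; fun_prop)).aestronglyMeasurable
    · filter_upwards with u
      have hmem := stdCdf_mem_Icc ((a * u + b) / σε)
      have hr := hrange _ hmem
      rw [Real.norm_eq_abs, abs_of_nonneg (mul_nonneg hr.1 (stdPdf_nonneg u))]
      exact mul_le_mul_of_nonneg_right hr.2 (stdPdf_nonneg u)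
  -- monotonicity of the posterior-reward term
  have hmono : Monotone (fun c : ℝ =>
      postReward θ σε σθ (fun v => r (stdCdf ((v - c) / σε))) c) := by
    intro c₁ c₂ hc
    simp only [key c₁, key c₂]
    have h1 : ∀ c : ℝ, (fun u => r (stdCdf ((s * u + (τ * c + (1 - τ) * θ) - c) / σε)) * stdPdf u)
        = (fun u => r (stdCdf ((s * u + ((1 - τ) * θ - (1 - τ) * c)) / σε)) * stdPdf u) := by
      intro c; ext u; ring_nf
    rw [h1 c₁, h1 c₂] -- might fail since goal is integrals; use simp_rw
    refine integral_mono (hint s _) (hint s _) ?_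
    intro u
    have hτlt : τ < 1 := by
      rw [hτ, div_lt_one (by positivity)]
      nlinarith
    have harg : (s * u + ((1 - τ) * θ - (1 - τ) * c₂)) / σε ≤
        (s * u + ((1 - τ) * θ - (1 - τ) * c₁)) / σε := by
      have : (1 - τ) * c₁ ≤ (1 - τ) * c₂ :=
        mul_le_mul_of_nonneg_left hc (by linarith)
      gcongr
    have hΦ := stdCdf_mono harg
    have h2 := hanti (stdCdf_mem_Icc _) (stdCdf_mem_Icc _) hΦ
    exact mul_le_mul_of_nonneg_right h2 (stdPdf_nonneg u)
  have hsm : StrictMono (fun c : ℝ =>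
      c + postReward θ σε σθ (fun v => r (stdCdf ((v - c) / σε))) c) := by
    intro a b hab
    exact add_lt_add_of_lt_of_le hab (hmono hab.le)
  exact ⟨hsm, fun c₁ c₂ h1 h2 => hsm.injective (h1.trans h2.symm)⟩
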